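/- arXiv:2601.21934 — 3 statements merged into one kernel-verified Lean document; each statement's English description precedes it below -/
import Mathlib

section
/- Let G be a finite group, let V be a finite-dimensional complex representation of G, and let α be a linear endomorphism of V commuting with the action of G. Let τ₁, …, τ_r be pairwise non-isomorphic irreducible finite-dimensional complex representations of G such that every irreducible complex representation of G is isomorphic to some τ_i. Then det(1 − T·α | V) = Π_{i=1}^{r} det(1 − T·α | Hom_G(τ_i, V))^{dim τ_i}, where on each Hom_G(τ_i, V) the endomorphism α acts by postcomposition. -/
/-!
Write `d i = dim τ i` and `m i = dim Hom_G(τ i, V)`. After a basis `b i` of each `τ i` is chosen,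
the evaluation map `Φ : ∏ i, (Fin (d i) → Hom_G(τ i, V)) → V`, `x ↦ ∑ i j, x i j (b i j)`,
intertwines `∏ i, (A i)^{⊕ d i}` with `α`, so the identity holds once `Φ` is bijective.
It is onto: the images of all equivariant maps `τ i → V` span an invariant subspace, and an
invariant complement of it (Maschke) contains no irreducible subrepresentation, hence is `0`.
Injectivity then reduces to `∑ i, m i * d i ≤ dim V`, i.e. to the injectivity of
`Ψ : ∏ i, (Fin (m i) → τ i) → V`, `v ↦ ∑ i l, s i l (v i l)` for bases `s i` of `Hom_G(τ i, V)`.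
By Schur's lemma every equivariant map `τ j → ∏ i, (Fin (m i) → τ i)` is `u ↦ (c l • u)_l` in
the `j`-th block and `0` elsewhere; it lands in `ker Ψ` only if `∑ l, c l • s j l = 0`, forcing
`c = 0`. So `ker Ψ` contains no irreducible subrepresentation and vanishes.
-/

open Module

universe u v w

namespace Polynomial

theorem reverse_prod {R ι : Type*} [CommSemiring R] [NoZeroDivisors R] (s : Finset ι)
    (p : ι → R[X]) : (∏ i ∈ s, p i).reverse = ∏ i ∈ s, (p i).reverse := by
  induction s using Finset.cons_induction with
  | empty => simpa using reverse_C (1 : R)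
  | cons a s ha ih => rw [Finset.prod_cons, Finset.prod_cons, reverse_mul_of_domain, ih]

theorem reverse_pow {R : Type*} [CommSemiring R] [NoZeroDivisors R] (p : R[X]) (n : ℕ) :
    (p ^ n).reverse = p.reverse ^ n := by
  simpa using reverse_prod (Finset.range n) fun _ => p

end Polynomial

namespace LinearMap

variable {R : Type*} [CommRing R]

theorem charpoly_eq_one_of_subsingleton [Nontrivial R] {M : Type*} [AddCommGroup M] [Module R M]
    [Module.Free R M] [Module.Finite R M] [Subsingleton M] (f : M →ₗ[R] M) : f.charpoly = 1 :=
  f.charpoly_monic.natDegree_eq_zero.mp (by simp [charpoly_natDegree, finrank_zero_of_subsingleton])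

theorem charpoly_piMap [Nontrivial R] {ι : Type v} [Fintype ι] {M : ι → Type w}
    [∀ i, AddCommGroup (M i)] [∀ i, Module R (M i)] [∀ i, Module.Free R (M i)]
    [∀ i, Module.Finite R (M i)]
    (f : ∀ i, M i →ₗ[R] M i) : (piMap f).charpoly = ∏ i, (f i).charpoly := by
  revert M
  apply Fintype.induction_empty_option (P := fun ι _ => ∀ {M : ι → Type w}
    [∀ i, AddCommGroup (M i)] [∀ i, Module R (M i)] [∀ i, Module.Free R (M i)]
    [∀ i, Module.Finite R (M i)] (f : ∀ i, M i →ₗ[R] M i),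
    (piMap f).charpoly = ∏ i, (f i).charpoly)
  · intro α β _ e ih M _ _ _ _ f
    let := Fintype.ofEquiv _ e.symm
    have hconj : (LinearEquiv.piCongrLeft R M e).conj (piMap fun a => f (e a)) = piMap f := by
      ext x b
      obtain ⟨a, rfl⟩ := e.surjective b
      change Equiv.piCongrLeft M e _ (e a) = _
      rw [Equiv.piCongrLeft_apply_apply]
      exact congrArg (f (e a)) (Equiv.piCongrLeft_symm_apply M e x a)
    rw [← hconj, LinearEquiv.charpoly_conj, ih]
    exact Fintype.prod_equiv e _ _ fun _ => rfl
  · intro M _ _ _ _ f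
    rw [Finset.univ_eq_empty, Finset.prod_empty, charpoly_eq_one_of_subsingleton]
  · intro α _ ih M _ _ _ _ f
    have hconj : (LinearEquiv.piOptionEquivProd R).conj (piMap f) =
        (f none).prodMap (piMap fun a => f (some a)) := by
      ext x <;> rfl
    rw [← LinearEquiv.charpoly_conj (LinearEquiv.piOptionEquivProd R), hconj, charpoly_prodMap, ih,
      Fintype.prod_option]

theorem charpoly_eq_of_bijective_of_comp_eq {M N : Type*} [AddCommGroup M] [Module R M]
    [Module.Free R M] [Module.Finite R M] [AddCommGroup N] [Module R N] [Module.Free R N]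
    [Module.Finite R N] {φ : M →ₗ[R] N} (hφ : Function.Bijective φ) {f : M →ₗ[R] M}
    {g : N →ₗ[R] N} (h : φ ∘ₗ f = g ∘ₗ φ) : f.charpoly = g.charpoly := by
  have : (LinearEquiv.ofBijective φ hφ).conj f = g := by
    ext y
    obtain ⟨x, rfl⟩ := hφ.2 y
    simpa [LinearEquiv.conj_apply, LinearEquiv.ofBijective_symm_apply_apply] using
      LinearMap.congr_fun h x
  rw [← this, LinearEquiv.charpoly_conj]

end LinearMap

namespace Representation

variable {k : Type u} {G : Type*} [Field k]

section Monoid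

variable [Monoid G] {V W : Type*} [AddCommGroup V] [Module k V] [AddCommGroup W] [Module k W]

theorem isIrreducible_iff (ρ : Representation k G V) :
    ρ.IsIrreducible ↔
      Nontrivial V ∧ ∀ U : Submodule k V, (∀ g, ∀ x ∈ U, ρ g x ∈ U) → U = ⊥ ∨ U = ⊤ := by
  refine ⟨fun h => ⟨?_, fun U hU => ?_⟩, fun ⟨hV, hU⟩ => ?_⟩
  · by_contra hV
    rw [not_nontrivial_iff_subsingleton] at hV
    exact bot_ne_top (α := Subrepresentation ρ) (Subrepresentation.ext (Subsingleton.elim _ _))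
  · exact (h.eq_bot_or_eq_top ⟨U, fun g x hx => hU g x hx⟩).imp
      (congrArg Subrepresentation.toSubmodule) (congrArg Subrepresentation.toSubmodule)
  · have : Nontrivial (Subrepresentation ρ) :=
      ⟨⊥, ⊤, fun h => bot_ne_top (congrArg Subrepresentation.toSubmodule h)⟩
    exact ⟨fun σ => (hU σ.toSubmodule fun g x hx => σ.apply_mem_toSubmodule g hx).imp
      Subrepresentation.ext Subrepresentation.ext⟩

theorem eq_zero_of_isIntertwining {σ : Representation k G V} {π : Representation k G W}
    [σ.IsIrreducible] [π.IsIrreducible] [IsEmpty (σ.Equiv π)] {f : V →ₗ[k] W}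
    (hf : ∀ g, f ∘ₗ σ g = π g ∘ₗ f) : f = 0 :=
  congrArg IntertwiningMap.toLinearMap (Subsingleton.elim (⟨f, hf⟩ : σ.IntertwiningMap π) 0)

theorem exists_eq_smul_id_of_isIntertwining [IsAlgClosed k] [FiniteDimensional k V]
    {σ : Representation k G V} [σ.IsIrreducible] {f : V →ₗ[k] V}
    (hf : ∀ g, f ∘ₗ σ g = σ g ∘ₗ f) : ∃ c : k, f = c • LinearMap.id := by
  obtain ⟨c, hc⟩ := IsIrreducible.algebraMap_intertwiningMap_bijective_of_isAlgClosed.2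
    (⟨f, hf⟩ : σ.IntertwiningMap σ)
  refine ⟨c, (congrArg IntertwiningMap.toLinearMap hc).symm.trans ?_⟩
  ext
  simp [Algebra.algebraMap_eq_smul_one]

def pi {ι : Type*} {V : ι → Type*} [∀ i, AddCommGroup (V i)] [∀ i, Module k (V i)]
    (ρ : ∀ i, Representation k G (V i)) : Representation k G (∀ i, V i) where
  toFun g := LinearMap.piMap fun i => ρ i g
  map_one' := by ext; simp
  map_mul' g h := by ext; simp

theorem isIrreducible_of_injective {ρ : Representation k G V} {π : Representation k G W}
    {j : W →ₗ[k] V} (hj : ∀ g, j ∘ₗ π g = ρ g ∘ₗ j) (hinj : Function.Injective j)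
    (hmin : Minimal (fun U : Submodule k V => U ≠ ⊥ ∧ ∀ g, ∀ x ∈ U, ρ g x ∈ U)
      (LinearMap.range j)) :
    π.IsIrreducible := by
  refine (isIrreducible_iff π).2 ⟨?_, fun U hU => ?_⟩
  · obtain ⟨_, ⟨x, rfl⟩, hx⟩ := Submodule.exists_mem_ne_zero_of_ne_bot hmin.prop.1
    exact ⟨x, 0, by rintro rfl; simp at hx⟩
  · have hUinv : ∀ g, ∀ y ∈ U.map j, ρ g y ∈ U.map j := by
      rintro g _ ⟨x, hx, rfl⟩
      exact ⟨π g x, hU g x hx, LinearMap.congr_fun (hj g) x⟩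
    by_cases hU0 : U = ⊥
    · exact .inl hU0
    · refine .inr (Submodule.map_injective_of_injective hinj ?_)
      rw [Submodule.map_top]
      have hmap0 : U.map j ≠ ⊥ := fun h =>
        hU0 (Submodule.map_injective_of_injective hinj (h.trans (Submodule.map_bot j).symm))
      exact le_antisymm LinearMap.map_le_range (hmin.2 ⟨hmap0, hUinv⟩ LinearMap.map_le_range)

end Monoid

theorem exists_isCompl_invariant [Group G] [Finite G] [NeZero (Nat.card G : k)] {V : Type*}
    [AddCommGroup V] [Module k V] (ρ : Representation k G V) {U : Submodule k V}
    (hU : ∀ g, ∀ x ∈ U, ρ g x ∈ U) : ∃ C, IsCompl U C ∧ ∀ g, ∀ x ∈ C, ρ g x ∈ C := by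
  obtain ⟨C, hC⟩ := exists_isCompl (⟨U, fun g x hx => hU g x hx⟩ : Subrepresentation ρ)
  exact ⟨C.toSubmodule,
    ⟨disjoint_iff.2 (congrArg Subrepresentation.toSubmodule (disjoint_iff.1 hC.1)),
      codisjoint_iff.2 (congrArg Subrepresentation.toSubmodule (codisjoint_iff.1 hC.2))⟩,
    fun g x hx => C.apply_mem_toSubmodule g hx⟩

variable {ι : Type*} {Vτ : ι → Type*} [∀ i, AddCommGroup (Vτ i)] [∀ i, Module k (Vτ i)]

def RepresentsIrreducibles [Monoid G] (τ : ∀ i, Representation k G (Vτ i)) : Prop :=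
  ∀ (W : Type u) [AddCommGroup W] [Module k W] [FiniteDimensional k W]
    (π : Representation k G W), π.IsIrreducible → ∃ i, Nonempty (π.Equiv (τ i))

section Monoid

variable [Monoid G] {τ : ∀ i, Representation k G (Vτ i)} {V : Type*} [AddCommGroup V]
  [Module k V] {ρ : Representation k G V}

theorem RepresentsIrreducibles.exists_intertwining_ne_zero_range_le [FiniteDimensional k V]
    (hτ : RepresentsIrreducibles τ) {U : Submodule k V} (hU : ∀ g, ∀ x ∈ U, ρ g x ∈ U)
    (hU0 : U ≠ ⊥) :
    ∃ i, ∃ f : Vτ i →ₗ[k] V, (∀ g, f ∘ₗ τ i g = ρ g ∘ₗ f) ∧ f ≠ 0 ∧ LinearMap.range f ≤ U := by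
  obtain ⟨W, hWU, hW⟩ := exists_minimal_le_of_wellFoundedLT
    (fun W : Submodule k V => W ≠ ⊥ ∧ ∀ g, ∀ x ∈ W, ρ g x ∈ W) U ⟨hU0, hU⟩
  -- `hτ` only sees representations on types in the universe of `k`, so `W` is replaced by a
  -- coordinate copy.
  let e : W ≃ₗ[k] (Fin (finrank k W) → k) := (Module.finBasis k W).equivFun
  let π : Representation k G (Fin (finrank k W) → k) :=
    (e.conjAlgEquiv k).toMonoidHom.comp (ρ.subrepresentation W fun g x hx => hW.1.2 g x hx)
  let j : (Fin (finrank k W) → k) →ₗ[k] V := W.subtype ∘ₗ e.symm.toLinearMap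
  have hj : ∀ g, j ∘ₗ π g = ρ g ∘ₗ j := by
    intro g
    ext x
    simp [j, π]
  have hjrange : LinearMap.range j = W := by simp [j, LinearMap.range_comp]
  obtain ⟨i, ⟨φ⟩⟩ := hτ _ π <| isIrreducible_of_injective hj
    (W.injective_subtype.comp e.symm.injective) (by rwa [hjrange])
  have hrange : LinearMap.range (j ∘ₗ φ.symm.toLinearMap) = W := by
    rw [LinearMap.range_comp_of_range_eq_top _ (LinearMap.range_eq_top.2 φ.symm.surjective),
      hjrange]
  refine ⟨i, j ∘ₗ φ.symm.toLinearMap, fun g => ?_, fun h => hW.prop.1 ?_, hrange.le.trans hWU⟩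
  · rw [LinearMap.comp_assoc, φ.symm.isIntertwining' g, ← LinearMap.comp_assoc, hj,
      LinearMap.comp_assoc]
  · rw [← hrange, h, LinearMap.range_zero]

variable [DecidableEq ι] {κ : ι → Type*} [IsAlgClosed k] [∀ i, FiniteDimensional k (Vτ i)]
  [∀ i, (τ i).IsIrreducible]

theorem exists_eq_single_smul_of_isIntertwining
    (hdist : Pairwise fun i j => IsEmpty ((τ i).Equiv (τ j))) {j : ι}
    {f : Vτ j →ₗ[k] ∀ i, κ i → Vτ i}
    (hf : ∀ g, f ∘ₗ τ j g = pi (fun i => pi fun _ : κ i => τ i) g ∘ₗ f) :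
    ∃ c : κ j → k, ∀ u, f u = Pi.single j fun l => c l • u := by
  have hcomp : ∀ i (l : κ i) g, (LinearMap.proj l ∘ₗ LinearMap.proj i ∘ₗ f) ∘ₗ τ j g =
      τ i g ∘ₗ (LinearMap.proj l ∘ₗ LinearMap.proj i ∘ₗ f) := by
    intro i l g
    ext u
    exact congr_fun (congr_fun (LinearMap.congr_fun (hf g) u) i) l
  choose c hc using fun l => exists_eq_smul_id_of_isIntertwining (hcomp j l)
  refine ⟨c, fun u => funext fun i => funext fun l => ?_⟩
  rcases eq_or_ne i j with rfl | hij
  · simpa using LinearMap.congr_fun (hc l) u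
  · have := hdist hij.symm
    simpa [hij] using LinearMap.congr_fun (eq_zero_of_isIntertwining (hcomp i l)) u

theorem RepresentsIrreducibles.injective_sum_comp_proj [Fintype ι] [∀ i, Fintype (κ i)]
    (hτ : RepresentsIrreducibles τ) (hdist : Pairwise fun i j => IsEmpty ((τ i).Equiv (τ j)))
    {s : ∀ i, κ i → Vτ i →ₗ[k] V} (hs : ∀ i l g, s i l ∘ₗ τ i g = ρ g ∘ₗ s i l)
    (hli : ∀ i, LinearIndependent k (s i)) :
    Function.Injective (∑ i, ∑ l, s i l ∘ₗ LinearMap.proj l ∘ₗ LinearMap.proj i :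
      (∀ i, κ i → Vτ i) →ₗ[k] V) := by
  set Ψ : (∀ i, κ i → Vτ i) →ₗ[k] V := ∑ i, ∑ l, s i l ∘ₗ LinearMap.proj l ∘ₗ LinearMap.proj i
  have hΨ : ∀ x, Ψ x = ∑ i, ∑ l, s i l (x i l) := fun x => by simp [Ψ]
  have hΨρ : ∀ g x, Ψ (pi (fun i => pi fun _ : κ i => τ i) g x) = ρ g (Ψ x) := by
    intro g x
    simp only [hΨ, map_sum]
    exact Finset.sum_congr rfl fun i _ => Finset.sum_congr rfl fun l _ =>
      LinearMap.congr_fun (hs i l g) (x i l)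
  rw [← LinearMap.ker_eq_bot]
  by_contra hK
  obtain ⟨j, f, hf, hf0, hfK⟩ := hτ.exists_intertwining_ne_zero_range_le
    (fun g x hx => by rw [LinearMap.mem_ker, hΨρ, LinearMap.mem_ker.1 hx, map_zero]) hK
  obtain ⟨c, hc⟩ := exists_eq_single_smul_of_isIntertwining hdist hf
  have hsum : ∑ l, c l • s j l = 0 := by
    ext u
    have := hfK ⟨u, rfl⟩
    rw [LinearMap.mem_ker, hc, hΨ, Finset.sum_eq_single j (fun i _ hi => by simp [hi]) (by simp)]
      at this
    simpa using this
  have hc0 : c = 0 := funext (Fintype.linearIndependent_iff.1 (hli j) c hsum)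
  exact hf0 (LinearMap.ext fun u => by simp [hc, hc0, ← Pi.zero_def])

theorem RepresentsIrreducibles.sum_finrank_mul_finrank_le [Fintype ι] [FiniteDimensional k V]
    (hτ : RepresentsIrreducibles τ) (hdist : Pairwise fun i j => IsEmpty ((τ i).Equiv (τ j)))
    {S : ∀ i, Submodule k (Vτ i →ₗ[k] V)} (hS : ∀ i, ∀ f ∈ S i, ∀ g, f ∘ₗ τ i g = ρ g ∘ₗ f) :
    ∑ i, finrank k (S i) * finrank k (Vτ i) ≤ finrank k V := by
  have := LinearMap.finrank_le_finrank_of_injective <| hτ.injective_sum_comp_proj hdist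
    (s := fun i l => (finBasis k (S i) l : Vτ i →ₗ[k] V)) (fun i l => hS i _ (Submodule.coe_mem _))
    (fun i => (finBasis k (S i)).linearIndependent.map' (S i).subtype (S i).ker_subtype)
  simpa [finrank_pi_fintype] using this

end Monoid

section Group

variable [Group G] [Finite G] [NeZero (Nat.card G : k)] {τ : ∀ i, Representation k G (Vτ i)}
  {V : Type*} [AddCommGroup V] [Module k V] [FiniteDimensional k V]

theorem RepresentsIrreducibles.iSup_range_eq_top (hτ : RepresentsIrreducibles τ)
    (ρ : Representation k G V) :
    ⨆ (i) (f : Vτ i →ₗ[k] V) (_ : ∀ g, f ∘ₗ τ i g = ρ g ∘ₗ f), LinearMap.range f = ⊤ := by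
  set R := ⨆ (i) (f : Vτ i →ₗ[k] V) (_ : ∀ g, f ∘ₗ τ i g = ρ g ∘ₗ f), LinearMap.range f
  have hle : ∀ i (f : Vτ i →ₗ[k] V) (hf : ∀ g, f ∘ₗ τ i g = ρ g ∘ₗ f), LinearMap.range f ≤ R :=
    fun i f hf => le_iSup₂_of_le i f (le_iSup_of_le hf le_rfl)
  have hR : ∀ g, ∀ x ∈ R, ρ g x ∈ R := by
    intro g x hx
    refine (show R ≤ R.comap (ρ g) from iSup_le fun i => iSup₂_le fun f hf => ?_) hx
    rintro _ ⟨v, rfl⟩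
    rw [Submodule.mem_comap, ← LinearMap.comp_apply, ← hf g]
    exact hle i f hf ⟨_, rfl⟩
  obtain ⟨C, hRC, hC⟩ := exists_isCompl_invariant ρ hR
  have hC0 : C = ⊥ := by
    by_contra hC0
    obtain ⟨i, f, hf, hf0, hfC⟩ := hτ.exists_intertwining_ne_zero_range_le hC hC0
    exact hf0 (LinearMap.range_eq_bot.1 (eq_bot_iff.2 (hRC.disjoint (hle i f hf) hfC)))
  simpa [hC0] using hRC.sup_eq_top

variable [IsAlgClosed k] [Fintype ι] [DecidableEq ι] [∀ i, FiniteDimensional k (Vτ i)]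
  [∀ i, (τ i).IsIrreducible]

theorem RepresentsIrreducibles.charpoly_eq_prod_charpoly_pow (hτ : RepresentsIrreducibles τ)
    (hdist : Pairwise fun i j => IsEmpty ((τ i).Equiv (τ j))) {ρ : Representation k G V}
    {α : V →ₗ[k] V} {S : ∀ i, Submodule k (Vτ i →ₗ[k] V)}
    (hS : ∀ i f, f ∈ S i ↔ ∀ g, f ∘ₗ τ i g = ρ g ∘ₗ f) {A : ∀ i, S i →ₗ[k] S i}
    (hA : ∀ i (f : S i), (A i f : Vτ i →ₗ[k] V) = α ∘ₗ f) :
    α.charpoly = ∏ i, (A i).charpoly ^ finrank k (Vτ i) := by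
  let b i := finBasis k (Vτ i)
  let Φ : (∀ i, Fin (finrank k (Vτ i)) → S i) →ₗ[k] V :=
    ∑ i, ∑ j, (LinearMap.applyₗ (b i j) ∘ₗ (S i).subtype) ∘ₗ LinearMap.proj j ∘ₗ LinearMap.proj i
  have hΦ : ∀ x, Φ x = ∑ i, ∑ j, (x i j : Vτ i →ₗ[k] V) (b i j) := fun x => by simp [Φ]
  have hsurj : Function.Surjective Φ := by
    rw [← LinearMap.range_eq_top, eq_top_iff, ← hτ.iSup_range_eq_top ρ]
    refine iSup_le fun i => iSup₂_le fun f hf => ?_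
    rintro _ ⟨v, rfl⟩
    refine ⟨Pi.single i fun j => (b i).repr v j • ⟨f, (hS i f).2 hf⟩, ?_⟩
    rw [hΦ, Finset.sum_eq_single i (fun i' _ hi' => by simp [hi']) (by simp)]
    simp only [Pi.single_eq_same, Submodule.coe_smul, LinearMap.smul_apply]
    conv_rhs => rw [← (b i).sum_repr v]
    simp only [map_sum, map_smul]
  have hinj : Function.Injective Φ := by
    refine (LinearMap.injective_iff_surjective_of_finrank_eq_finrank (le_antisymm ?_ ?_)).2 hsurj
    · simpa [finrank_pi_fintype, mul_comm] using
        hτ.sum_finrank_mul_finrank_le hdist fun i f hf => (hS i f).1 hf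
    · rw [← finrank_top, ← LinearMap.range_eq_top.2 hsurj]
      exact LinearMap.finrank_range_le Φ
  have hΦA : Φ ∘ₗ LinearMap.piMap (fun i => LinearMap.piMap fun _ => A i) = α ∘ₗ Φ := by
    refine LinearMap.ext fun x => ?_
    simp [hΦ, hA, map_sum]
  rw [← LinearMap.charpoly_eq_of_bijective_of_comp_eq ⟨hinj, hsurj⟩ hΦA, LinearMap.charpoly_piMap]
  simp [LinearMap.charpoly_piMap]

end Group

end Representation

theorem reverse_charpoly_eq_prod_pieces_general {G : Type*} [Group G] [Fintype G]
    {VV : Type*} [AddCommGroup VV] [Module ℂ VV] [FiniteDimensional ℂ VV]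
    (ρ : Representation ℂ G VV)
    (α : VV →ₗ[ℂ] VV)
    (r : ℕ) (Vτ : Fin r → Type)
    [∀ i, AddCommGroup (Vτ i)] [∀ i, Module ℂ (Vτ i)] [∀ i, FiniteDimensional ℂ (Vτ i)]
    (τ : ∀ i, Representation ℂ G (Vτ i))
    -- each `τ i` is irreducible
    (hirr : ∀ i, Nontrivial (Vτ i) ∧
      ∀ U : Submodule ℂ (Vτ i), (∀ g : G, ∀ x ∈ U, τ i g x ∈ U) → U = ⊥ ∨ U = ⊤)
    -- the `τ i` are pairwise non-isomorphic
    (hdistinct : ∀ i j, i ≠ j →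
      ¬ ∃ e : Vτ i ≃ₗ[ℂ] Vτ j, ∀ (g : G) (v : Vτ i), e (τ i g v) = τ j g (e v))
    -- every irreducible complex representation of `G` is isomorphic to some `τ i`
    (hcomplete : ∀ (W : Type) [AddCommGroup W] [Module ℂ W] [FiniteDimensional ℂ W]
      (π : Representation ℂ G W),
      (Nontrivial W ∧
        ∀ U : Submodule ℂ W, (∀ g : G, ∀ x ∈ U, π g x ∈ U) → U = ⊥ ∨ U = ⊤) →
      ∃ i, ∃ e : W ≃ₗ[ℂ] Vτ i, ∀ (g : G) (v : W), e (π g v) = τ i g (e v))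
    -- `S i = Hom_G(τ i, V)` with the postcomposition action `A i` of `α`
    (S : ∀ i, Submodule ℂ (Vτ i →ₗ[ℂ] VV))
    (hS : ∀ i (f : Vτ i →ₗ[ℂ] VV), f ∈ S i ↔ ∀ g : G, f ∘ₗ τ i g = ρ g ∘ₗ f)
    (A : ∀ i, S i →ₗ[ℂ] S i)
    (hA : ∀ i (f : S i), (A i f : Vτ i →ₗ[ℂ] VV) = α ∘ₗ (f : Vτ i →ₗ[ℂ] VV)) :
    (LinearMap.charpoly α).reverse =
      ∏ i, ((LinearMap.charpoly (A i)).reverse) ^ (Module.finrank ℂ (Vτ i)) := by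
  have : ∀ i, (τ i).IsIrreducible := fun i => (Representation.isIrreducible_iff _).2 (hirr i)
  have hdist : Pairwise fun i j => IsEmpty ((τ i).Equiv (τ j)) := fun i j hij =>
    ⟨fun φ => hdistinct i j hij ⟨φ.toLinearEquiv, φ.toIntertwiningMap.isIntertwining⟩⟩
  have hτ : Representation.RepresentsIrreducibles τ := fun W _ _ _ π hπ => by
    obtain ⟨i, e, he⟩ := hcomplete W π ((Representation.isIrreducible_iff π).1 hπ)
    exact ⟨i, ⟨.mk e fun g => LinearMap.ext (he g)⟩⟩
  rw [hτ.charpoly_eq_prod_charpoly_pow hdist hS hA, Polynomial.reverse_prod]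
  simp_rw [Polynomial.reverse_pow]

/-- Let `G` be a finite group, `V` a finite-dimensional complex representation
of `G`, and `α` an endomorphism of `V` commuting with the `G`-action. Let `τ₁, …, τ_r` be
pairwise non-isomorphic irreducible finite-dimensional complex representations of `G` such that
every irreducible complex representation of `G` is isomorphic to some `τ_i`. Then
`det(1 − T·α | V) = ∏ᵢ det(1 − T·α | Hom_G(τᵢ, V))^{dim τᵢ}`, where `det(1 − T·β | W)` is the
reverse characteristic polynomial of `β` and `α` acts on each `Hom_G(τᵢ, V)` by
postcomposition. -/
theorem reverse_charpoly_eq_prod_pieces {G : Type*} [Group G] [Fintype G]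
    {VV : Type*} [AddCommGroup VV] [Module ℂ VV] [FiniteDimensional ℂ VV]
    (ρ : Representation ℂ G VV)
    (α : VV →ₗ[ℂ] VV) (hα : ∀ g : G, α ∘ₗ ρ g = ρ g ∘ₗ α)
    (r : ℕ) (Vτ : Fin r → Type)
    [∀ i, AddCommGroup (Vτ i)] [∀ i, Module ℂ (Vτ i)] [∀ i, FiniteDimensional ℂ (Vτ i)]
    (τ : ∀ i, Representation ℂ G (Vτ i))
    -- each `τ i` is irreducible
    (hirr : ∀ i, Nontrivial (Vτ i) ∧
      ∀ U : Submodule ℂ (Vτ i), (∀ g : G, ∀ x ∈ U, τ i g x ∈ U) → U = ⊥ ∨ U = ⊤)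
    -- the `τ i` are pairwise non-isomorphic
    (hdistinct : ∀ i j, i ≠ j →
      ¬ ∃ e : Vτ i ≃ₗ[ℂ] Vτ j, ∀ (g : G) (v : Vτ i), e (τ i g v) = τ j g (e v))
    -- every irreducible complex representation of `G` is isomorphic to some `τ i`
    (hcomplete : ∀ (W : Type) [AddCommGroup W] [Module ℂ W] [FiniteDimensional ℂ W]
      (π : Representation ℂ G W),
      (Nontrivial W ∧
        ∀ U : Submodule ℂ W, (∀ g : G, ∀ x ∈ U, π g x ∈ U) → U = ⊥ ∨ U = ⊤) →
      ∃ i, ∃ e : W ≃ₗ[ℂ] Vτ i, ∀ (g : G) (v : W), e (π g v) = τ i g (e v))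
    -- `S i = Hom_G(τ i, V)` with the postcomposition action `A i` of `α`
    (S : ∀ i, Submodule ℂ (Vτ i →ₗ[ℂ] VV))
    (hS : ∀ i (f : Vτ i →ₗ[ℂ] VV), f ∈ S i ↔ ∀ g : G, f ∘ₗ τ i g = ρ g ∘ₗ f)
    (A : ∀ i, S i →ₗ[ℂ] S i)
    (hA : ∀ i (f : S i), (A i f : Vτ i →ₗ[ℂ] VV) = α ∘ₗ (f : Vτ i →ₗ[ℂ] VV)) :
    (LinearMap.charpoly α).reverse =
      ∏ i, ((LinearMap.charpoly (A i)).reverse) ^ (Module.finrank ℂ (Vτ i)) :=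
  reverse_charpoly_eq_prod_pieces_general ρ α r Vτ τ hirr hdistinct hcomplete S hS A hA
end

section
/- In the group algebra ℚ[G] of the dihedral group G of order 10, let r be a rotation of order 5 and s a reflection (so s² = 1 and s·r·s = r^{−1}), and set e = (1 + s)/2, x = (r + r^{−1})·e, and N = 1 + r + r² + r³ + r⁴. Then e is idempotent, x commutes with e and satisfies e·x·e = x, and the identity x² + x − e = N·e holds in ℚ[G]. -/
/-- In the group algebra `ℚ[G]` of the dihedral group `G` of order 10, let
`r` be a rotation of order 5 and `s` a reflection (so `s² = 1` and `s·r·s = r⁻¹`), and set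
`e = (1 + s)/2`, `x = (r + r⁻¹)·e` and `N = 1 + r + r² + r³ + r⁴`. Then `e` is idempotent,
`x` commutes with `e` and satisfies `e·x·e = x`, and `x² + x − e = N·e` holds in `ℚ[G]`. -/
theorem golden_ratio_identity_D10 (r s : DihedralGroup 5)
    (hr : orderOf r = 5) (hs : s ^ 2 = 1) (hsrs : s * r * s = r⁻¹)
    (e x N : MonoidAlgebra ℚ (DihedralGroup 5))
    (he : e = (2 : ℚ)⁻¹ •
      (1 + MonoidAlgebra.of ℚ (DihedralGroup 5) s))
    (hx : x = (MonoidAlgebra.of ℚ (DihedralGroup 5) r +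
      MonoidAlgebra.of ℚ (DihedralGroup 5) r⁻¹) * e)
    (hN : N = 1 + MonoidAlgebra.of ℚ (DihedralGroup 5) r +
      MonoidAlgebra.of ℚ (DihedralGroup 5) (r ^ 2) +
      MonoidAlgebra.of ℚ (DihedralGroup 5) (r ^ 3) +
      MonoidAlgebra.of ℚ (DihedralGroup 5) (r ^ 4)) :
    e * e = e ∧ x * e = e * x ∧ e * x * e = x ∧ x ^ 2 + x - e = N * e := by
  set F := MonoidAlgebra.of ℚ (DihedralGroup 5) with hF
  have hr5 : r ^ 5 = 1 := by simpa [hr] using pow_orderOf_eq_one r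
  have h45 : r * r ^ 4 = 1 := by rw [← pow_succ']; exact hr5
  have h54 : r ^ 4 * r = 1 := by rw [← pow_succ]; exact hr5
  have h22 : r * r = r ^ 2 := (sq r).symm
  have h44 : r ^ 4 * r ^ 4 = r ^ 3 := by
    rw [← pow_add, show (4+4 : ℕ) = 3 + 5 by norm_num, pow_add, hr5, mul_one]
  have hss : s * s = 1 := by rw [← sq]; exact hs
  have hri : r⁻¹ = r ^ 4 := inv_eq_of_mul_eq_one_right h45
  have hsr : s * r = r ^ 4 * s := by
    rw [← hri]
    calc s * r = s * r * (s * s) := by rw [hss, mul_one]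
    _ = (s * r * s) * s := by rw [mul_assoc, mul_assoc, mul_assoc]
    _ = r⁻¹ * s := by rw [hsrs]
  have key : ∀ g : DihedralGroup 5, s * (r * g) = r ^ 4 * (s * g) := fun g => by
    rw [← mul_assoc, hsr, mul_assoc]
  have hsr4 : s * r ^ 4 = r * s := by
    have e1 : s * r ^ 4 = s * (r * (r * (r * r))) := by
      rw [show r * (r * (r * r)) = r ^ 4 by simp [pow_succ, mul_assoc]]
    rw [e1, key, key, key, show s * r = r ^ 4 * s from hsr,
      show r ^ 4 * (r ^ 4 * (r ^ 4 * (r ^ 4 * s))) = (r ^ 4 * (r ^ 4 * (r ^ 4 * r ^ 4))) * s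
        by group,
      show r ^ 4 * (r ^ 4 * (r ^ 4 * r ^ 4)) = r ^ 16 by group,
      show (16 : ℕ) = 1 + 5 * 3 by norm_num, pow_add, pow_mul, hr5, one_pow, mul_one, pow_one]
  have Hss : ∀ y, F s * (F s * y) = y := by
    intro y; rw [← mul_assoc, ← map_mul, hss, map_one, one_mul]
  have Hsr : ∀ y, F s * (F r * y) = F (r^4) * (F s * y) := by
    intro y; rw [← mul_assoc, ← map_mul, hsr, map_mul, mul_assoc]
  have Hsr4 : ∀ y, F s * (F (r^4) * y) = F r * (F s * y) := by
    intro y; rw [← mul_assoc, ← map_mul, hsr4, map_mul, mul_assoc]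
  have Hrr4 : ∀ y, F r * (F (r^4) * y) = y := by
    intro y; rw [← mul_assoc, ← map_mul, h45, map_one, one_mul]
  have Hr4r : ∀ y, F (r^4) * (F r * y) = y := by
    intro y; rw [← mul_assoc, ← map_mul, h54, map_one, one_mul]
  have Hrr : ∀ y, F r * (F r * y) = F (r^2) * y := by
    intro y; rw [← mul_assoc, ← map_mul, h22]
  have Hr4r4 : ∀ y, F (r^4) * (F (r^4) * y) = F (r^3) * y := by
    intro y; rw [← mul_assoc, ← map_mul, h44]
  have Hss' : F s * F s = 1 := by rw [← map_mul, hss, map_one]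
  have Hsr' : F s * F r = F (r^4) * F s := by rw [← map_mul, hsr, map_mul]
  have Hsr4' : F s * F (r^4) = F r * F s := by rw [← map_mul, hsr4, map_mul]
  have Hrr4' : F r * F (r^4) = 1 := by rw [← map_mul, h45, map_one]
  have Hr4r' : F (r^4) * F r = 1 := by rw [← map_mul, h54, map_one]
  have Hrr' : F r * F r = F (r^2) := by rw [← map_mul, h22]
  have Hr4r4' : F (r^4) * F (r^4) = F (r^3) := by rw [← map_mul, h44]
  subst he hx hN
  rw [hri]
  refine ⟨?_, ?_, ?_, ?_⟩ <;>
  · simp only [mul_assoc, smul_mul_assoc, mul_smul_comm, mul_add, add_mul, one_mul, mul_one, smul_add,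
      smul_smul, pow_two, sub_mul, Hss, Hsr, Hsr4, Hrr4, Hr4r, Hrr, Hr4r4,
      Hss', Hsr', Hsr4', Hrr4', Hr4r', Hrr', Hr4r4']
    module
end

section
/- Let m, n ≥ 2 be integers and let δ = gcd(m, n). Then the number of pairs of integers (i, j) with 1 ≤ i ≤ n − 1, 1 ≤ j ≤ m − 1 and −m·i + j·n − δ ≥ 0 is equal to ((m − 1)(n − 1) + 1 − δ)/2. -/
/-!
Write `ℓ(i, j) = j n - m i`. On the box `[1, n - 1] × [1, m - 1]` every value of `ℓ` is a
multiple of `δ = gcd(m, n)`, so `ℓ(i, j) ≥ δ` just means `ℓ(i, j) > 0`. The point reflection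
`(i, j) ↦ (n - i, m - j)` preserves the box and negates `ℓ`, so the box has as many points with
`ℓ > 0` as with `ℓ < 0`. The points with `ℓ = 0` lie on the diagonal `j / i = m / n`; they are
`k (n / δ, m / δ)` for `1 ≤ k ≤ δ - 1`. Hence `2 · count + (δ - 1) = (m - 1)(n - 1)`.
-/

open Finset

theorem Finset.card_eq_card_filter_pos_add_card_filter_neg_add_card_filter_eq_zero
    {α β : Type*} [Zero β] [LinearOrder β] (s : Finset α) (f : α → β) :
    #s = #{a ∈ s | 0 < f a} + #{a ∈ s | f a < 0} + #{a ∈ s | f a = 0} := by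
  rw [← card_filter_add_card_filter_not (s := s) (fun a => 0 < f a),
    ← card_filter_add_card_filter_not (s := {a ∈ s | ¬0 < f a}) (fun a => f a < 0),
    filter_filter, filter_filter, add_assoc]
  congr 3 <;> refine filter_congr fun a _ => ?_
  · exact ⟨And.right, fun h => ⟨h.not_gt, h⟩⟩
  · simp only [not_lt]
    exact ⟨fun h => le_antisymm h.1 h.2, fun h => ⟨h.le, h.ge⟩⟩

theorem IsCoprime.exists_eq_mul_of_mul_eq_mul {R : Type*} [CommRing R] [IsDomain R]
    {a b i j : R} (hab : IsCoprime a b) (ha : a ≠ 0) (h : j * a = b * i) : ∃ k, i = k * a ∧ j = k * b := by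
  obtain ⟨k, rfl⟩ := hab.dvd_of_dvd_mul_left ⟨j, by rw [mul_comm a, h]⟩
  refine ⟨k, mul_comm _ _, mul_right_cancel₀ ha ?_⟩
  rw [h]
  ring

namespace Superelliptic

noncomputable def box (m n : ℤ) : Finset (ℤ × ℤ) := Icc 1 (n - 1) ×ˢ Icc 1 (m - 1)

def form (m n : ℤ) (p : ℤ × ℤ) : ℤ := p.2 * n - m * p.1

def reflect (m n : ℤ) (p : ℤ × ℤ) : ℤ × ℤ := (n - p.1, m - p.2)

variable {m n : ℤ}

theorem mem_box {p : ℤ × ℤ} :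
    p ∈ box m n ↔ 1 ≤ p.1 ∧ p.1 ≤ n - 1 ∧ 1 ≤ p.2 ∧ p.2 ≤ m - 1 := by
  simp only [box, mem_product, mem_Icc, and_assoc]

theorem card_box (hm : 1 ≤ m) (hn : 1 ≤ n) : (#(box m n) : ℤ) = (n - 1) * (m - 1) := by
  rw [box, card_product, Int.card_Icc, Int.card_Icc]
  push_cast [Int.toNat_of_nonneg (by omega : (0 : ℤ) ≤ n - 1 + 1 - 1),
    Int.toNat_of_nonneg (by omega : (0 : ℤ) ≤ m - 1 + 1 - 1)]
  ring

theorem setOf_eq_filter_form_pos {d : ℤ} (hd : 0 < d) (hdm : d ∣ m) (hdn : d ∣ n) :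
    {p : ℤ × ℤ | 1 ≤ p.1 ∧ p.1 ≤ n - 1 ∧ 1 ≤ p.2 ∧ p.2 ≤ m - 1 ∧
        0 ≤ -(m * p.1) + p.2 * n - d} = ({p ∈ box m n | 0 < form m n p} : Finset _) := by
  ext p
  have hdvd : d ∣ form m n p := dvd_sub (hdn.mul_left _) (hdm.mul_right _)
  have hd_le : 0 < form m n p → d ≤ form m n p := (Int.le_of_dvd · hdvd)
  rw [mem_coe, mem_filter, mem_box]
  simp only [and_assoc, form] at hd_le ⊢
  refine and_congr_right' <| and_congr_right' <| and_congr_right' <| and_congr_right' ?_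
  omega

theorem reflect_reflect (p : ℤ × ℤ) : reflect m n (reflect m n p) = p := by
  simp [reflect]

theorem reflect_mem_box {p : ℤ × ℤ} (hp : p ∈ box m n) : reflect m n p ∈ box m n := by
  rw [mem_box] at hp ⊢
  simp only [reflect]
  omega

theorem form_reflect (p : ℤ × ℤ) : form m n (reflect m n p) = -form m n p := by
  simp only [form, reflect]
  ring

theorem card_filter_form_pos_eq_card_filter_form_neg :
    #{p ∈ box m n | 0 < form m n p} = #{p ∈ box m n | form m n p < 0} := by
  refine card_nbij' (reflect m n) (reflect m n) ?_ ?_ (fun p _ => reflect_reflect p)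
    (fun p _ => reflect_reflect p) <;>
  · intro p hp
    simp only [coe_filter, Set.mem_ofPred_eq, form_reflect] at hp ⊢
    exact ⟨reflect_mem_box hp.1, by omega⟩

theorem form_mul_mul (g : ℤ) (p : ℤ × ℤ) : form (m * g) (n * g) p = g * form m n p := by
  simp only [form]
  ring

theorem form_eq_zero_iff (hnm : IsCoprime n m) (hn : n ≠ 0) {p : ℤ × ℤ} :
    form m n p = 0 ↔ ∃ k, p = (k * n, k * m) := by
  constructor
  · intro h
    obtain ⟨k, h1, h2⟩ := hnm.exists_eq_mul_of_mul_eq_mul hn (sub_eq_zero.1 h)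
    exact ⟨k, Prod.ext h1 h2⟩
  · rintro ⟨k, rfl⟩
    simp only [form]
    ring

theorem mul_mem_box_mul_iff (hm : 0 < m) (hn : 0 < n) {g k : ℤ} :
    (k * n, k * m) ∈ box (m * g) (n * g) ↔ k ∈ Icc 1 (g - 1) := by
  rw [mem_box, mem_Icc]
  constructor
  · rintro ⟨h1, h2, -, -⟩
    have hk : 0 < k := pos_of_mul_pos_left (by omega) hn.le
    have hkg : k < g := lt_of_mul_lt_mul_right (by linarith) hn.le
    omega
  · rintro ⟨h1, h2⟩
    refine ⟨?_, ?_, ?_, ?_⟩ <;> nlinarith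

theorem card_filter_form_mul_eq_zero (hnm : IsCoprime n m) (hm : 0 < m) (hn : 0 < n) {g : ℤ}
    (hg : 0 < g) :
    #{p ∈ box (m * g) (n * g) | form (m * g) (n * g) p = 0} = #(Icc 1 (g - 1)) := by
  have hline : {p ∈ box (m * g) (n * g) | form (m * g) (n * g) p = 0} =
      (Icc 1 (g - 1)).image fun k => (k * n, k * m) := by
    ext p
    simp only [mem_filter, mem_image, form_mul_mul, mul_eq_zero, hg.ne', false_or,
      form_eq_zero_iff hnm hn.ne']
    constructor
    · rintro ⟨hp, k, rfl⟩
      exact ⟨k, (mul_mem_box_mul_iff hm hn).1 hp, rfl⟩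
    · rintro ⟨k, hk, rfl⟩
      exact ⟨(mul_mem_box_mul_iff hm hn).2 hk, k, rfl⟩
  rw [hline, card_image_of_injective]
  exact fun k k' h => mul_right_cancel₀ hn.ne' (Prod.ext_iff.1 h).1

theorem card_filter_form_eq_zero (hm : 0 < m) (hn : 0 < n) :
    (#{p ∈ box m n | form m n p = 0} : ℤ) = Int.gcd m n - 1 := by
  obtain ⟨g, m', n', hg, hcop, rfl, rfl⟩ :=
    Int.exists_gcd_one' (Int.gcd_pos_of_ne_zero_left n hm.ne')
  have hg' : (0 : ℤ) < g := by exact_mod_cast hg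
  have hm' : 0 < m' := pos_of_mul_pos_left hm hg'.le
  have hn' : 0 < n' := pos_of_mul_pos_left hn hg'.le
  have hnm : IsCoprime n' m' := Int.isCoprime_iff_gcd_eq_one.2 (by rwa [Int.gcd_comm])
  rw [card_filter_form_mul_eq_zero hnm hm' hn' hg', Int.card_Icc, Int.gcd_mul_right, hcop,
    Int.natAbs_natCast, one_mul, Int.toNat_of_nonneg (by omega)]
  ring

end Superelliptic

open Superelliptic in
/-- Let `m, n ≥ 2` be integers and `δ = gcd(m, n)`. Then the number of
pairs of integers `(i, j)` with `1 ≤ i ≤ n − 1`, `1 ≤ j ≤ m − 1` and `−m·i + j·n − δ ≥ 0`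
equals `((m − 1)(n − 1) + 1 − δ)/2` (the genus of the superelliptic curve `y^m = f(x)` with
`f` separable of degree `n`). -/
theorem superelliptic_differential_count (m n : ℤ) (hm : 2 ≤ m) (hn : 2 ≤ n)
    (δ : ℤ) (hδ : δ = Int.gcd m n) :
    (Set.ncard {p : ℤ × ℤ | 1 ≤ p.1 ∧ p.1 ≤ n - 1 ∧ 1 ≤ p.2 ∧ p.2 ≤ m - 1 ∧
        0 ≤ -(m * p.1) + p.2 * n - δ} : ℚ) =
      (((m : ℚ) - 1) * ((n : ℚ) - 1) + 1 - (δ : ℚ)) / 2 := by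
  have hδpos : 0 < δ := hδ ▸ Int.natCast_pos.2 (Int.gcd_pos_of_ne_zero_left n (by omega))
  rw [setOf_eq_filter_form_pos hδpos (hδ ▸ Int.gcd_dvd_left m n) (hδ ▸ Int.gcd_dvd_right m n),
    Set.ncard_coe_finset]
  have hsplit : (#(box m n) : ℤ) =
      2 * #{p ∈ box m n | 0 < form m n p} + #{p ∈ box m n | form m n p = 0} := by
    rw [card_eq_card_filter_pos_add_card_filter_neg_add_card_filter_eq_zero (box m n) (form m n),
      ← card_filter_form_pos_eq_card_filter_form_neg]
    push_cast
    ring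
  rw [card_box (by omega) (by omega), card_filter_form_eq_zero (by omega) (by omega), ← hδ]
    at hsplit
  have hsplit_ℚ : ((n : ℚ) - 1) * (m - 1) = 2 * #{p ∈ box m n | 0 < form m n p} + (δ - 1) := by
    exact_mod_cast hsplit
  linarith
end
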